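/- arXiv:2601.20769 — 6 statements merged into one kernel-verified Lean document; each statement's English description precedes it below -/
import Mathlib

section
/- Let f : ℝ^n → ℝ be twice continuously differentiable on an open convex set U containing the segment [θ, θ'], with Hessian H that is L_H-Lipschitz on U in operator norm. Suppose H(θ) is invertible with ‖H(θ)⁻¹‖ ≤ κ, let g = ∇f(θ), p = −H(θ)⁻¹g, and θ' = θ + η·p for η > 0. Then ∇f(θ') = (1 − η)·g + r, where the remainder satisfies ‖r‖ ≤ (L_H/2)·κ²·η²·‖g‖². -/
/-!
Taylor's formula for the gradient with the Lipschitz Hessian gives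
`‖∇f(θ + v) - ∇f(θ) - H(θ) v‖ ≤ (L_H / 2) ‖v‖²`. For the Newton direction `v = η p` we have
`H(θ) v = -η g`, so the left side is exactly `‖∇f(θ') - (1 - η) g‖`, and `‖v‖ ≤ η κ ‖g‖`.
-/

open Set

section Taylor

variable {E F : Type*} [NormedAddCommGroup E] [NormedSpace ℝ E]
  [NormedAddCommGroup F] [NormedSpace ℝ F]

theorem norm_image_sub_sub_fderiv_le_of_lipschitz_segment {G : E → F} {G' : E → E →L[ℝ] F}
    {L : ℝ} {x v : E}
    (hG : ∀ y ∈ segment ℝ x (x + v), HasFDerivAt G (G' y) y)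
    (hlip : ∀ y ∈ segment ℝ x (x + v), ‖G' y - G' x‖ ≤ L * ‖y - x‖) :
    ‖G (x + v) - G x - G' x v‖ ≤ L / 2 * ‖v‖ ^ 2 := by
  have hmem : ∀ t ∈ Icc (0 : ℝ) 1, x + t • v ∈ segment ℝ x (x + v) := fun t ht => by
    rw [segment_eq_image']
    exact ⟨t, ht, by simp⟩
  -- `φ t = G (x + t v) - G x - t G'(x) v` vanishes at `0` and `‖φ'(t)‖ ≤ L t ‖v‖²`.
  set φ : ℝ → F := fun t => G (x + t • v) - t • G' x v - G x
  have hφ' : ∀ t ∈ Icc (0 : ℝ) 1, HasDerivAt φ (G' (x + t • v) v - G' x v) t := by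
    intro t ht
    have hline : HasDerivAt (fun t : ℝ => x + t • v) v t := by
      simpa using ((hasDerivAt_id t).smul_const v).const_add x
    have hcomp := (hG _ (hmem t ht)).comp_hasDerivAt t hline
    simpa [φ] using (hcomp.sub ((hasDerivAt_id t).smul_const (G' x v))).sub_const (G x)
  have hbound : ∀ t ∈ Ico (0 : ℝ) 1, ‖G' (x + t • v) v - G' x v‖ ≤ L * ‖v‖ ^ 2 * t := by
    intro t ht
    calc ‖G' (x + t • v) v - G' x v‖ = ‖(G' (x + t • v) - G' x) v‖ := rfl
      _ ≤ L * ‖x + t • v - x‖ * ‖v‖ :=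
        (ContinuousLinearMap.le_opNorm _ _).trans
          (mul_le_mul_of_nonneg_right (hlip _ (hmem t (Ico_subset_Icc_self ht))) (norm_nonneg v))
      _ = L * ‖v‖ ^ 2 * t := by
        rw [add_sub_cancel_left, norm_smul, Real.norm_eq_abs, abs_of_nonneg ht.1]
        ring
  have hB : ∀ t : ℝ,
      HasDerivAt (fun t : ℝ => L * ‖v‖ ^ 2 / 2 * t ^ 2) (L * ‖v‖ ^ 2 * t) t := fun t => by
    refine ((hasDerivAt_pow 2 t).const_mul (L * ‖v‖ ^ 2 / 2)).congr_deriv ?_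
    push_cast
    ring
  have hφ1 : ‖φ 1‖ ≤ L * ‖v‖ ^ 2 / 2 * 1 ^ 2 :=
    image_norm_le_of_norm_deriv_right_le_deriv_boundary
      (fun t ht => (hφ' t ht).continuousAt.continuousWithinAt)
      (fun t ht => (hφ' t (Ico_subset_Icc_self ht)).hasDerivWithinAt)
      (by simp [φ]) hB hbound (right_mem_Icc.mpr zero_le_one)
  calc ‖G (x + v) - G x - G' x v‖ = ‖φ 1‖ := by
        congr 1
        simp only [φ, one_smul]
        abel
    _ ≤ L / 2 * ‖v‖ ^ 2 := by linarith

end Taylor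

theorem ContDiffOn.gradient_of_isOpen {E : Type*} [NormedAddCommGroup E]
    [InnerProductSpace ℝ E] [CompleteSpace E] {f : E → ℝ} {U : Set E}
    {m n : WithTop ℕ∞} (hf : ContDiffOn ℝ n f U) (hU : IsOpen U) (hmn : m + 1 ≤ n) :
    ContDiffOn ℝ m (gradient f) U :=
  (InnerProductSpace.toDual ℝ E).symm.contDiff.comp_contDiffOn (hf.fderiv_of_isOpen hU hmn)

theorem gradient_after_newton_step_general
    {n : ℕ} (f : EuclideanSpace ℝ (Fin n) → ℝ)
    (U : Set (EuclideanSpace ℝ (Fin n))) (hU : IsOpen U)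
    (LH κ η : ℝ) (hLH : 0 < LH)
    (hf : ContDiffOn ℝ 2 f U)
    (hLip : ∀ x ∈ U, ∀ y ∈ U,
      ‖fderiv ℝ (gradient f) x - fderiv ℝ (gradient f) y‖ ≤ LH * ‖x - y‖)
    (θ : EuclideanSpace ℝ (Fin n)) (hθ : θ ∈ U)
    (Hinv : EuclideanSpace ℝ (Fin n) →L[ℝ] EuclideanSpace ℝ (Fin n))
    (hinv₂ : (fderiv ℝ (gradient f) θ).comp Hinv = ContinuousLinearMap.id ℝ _)
    (hκbound : ‖Hinv‖ ≤ κ)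
    (hseg : segment ℝ θ (θ + η • (-(Hinv (gradient f θ)))) ⊆ U) :
    ‖gradient f (θ + η • (-(Hinv (gradient f θ)))) - (1 - η) • gradient f θ‖ ≤
      (LH / 2) * κ ^ 2 * η ^ 2 * ‖gradient f θ‖ ^ 2 := by
  set H := fderiv ℝ (gradient f)
  set g := gradient f θ
  set v := η • (-(Hinv g))
  have hdiff : ∀ y ∈ U, HasFDerivAt (gradient f) (H y) y := fun y hy =>
    (((hf.gradient_of_isOpen hU le_rfl).differentiableOn one_ne_zero).differentiableAt
      (hU.mem_nhds hy)).hasFDerivAt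
  have htaylor : ‖gradient f (θ + v) - g - H θ v‖ ≤ LH / 2 * ‖v‖ ^ 2 :=
    norm_image_sub_sub_fderiv_le_of_lipschitz_segment (fun y hy => hdiff y (hseg hy))
      (fun y hy => hLip y (hseg hy) θ hθ)
  have hHv : H θ v = -(η • g) := by
    simp [v, show H θ (Hinv g) = g from congrArg (· g) hinv₂]
  have hv : ‖v‖ ^ 2 ≤ κ ^ 2 * η ^ 2 * ‖g‖ ^ 2 := by
    have hHinv_g : ‖Hinv g‖ ≤ κ * ‖g‖ := Hinv.le_of_opNorm_le hκbound g
    calc ‖v‖ ^ 2 = η ^ 2 * ‖Hinv g‖ ^ 2 := by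
          rw [norm_smul, norm_neg, mul_pow, Real.norm_eq_abs, sq_abs]
      _ ≤ η ^ 2 * (κ * ‖g‖) ^ 2 := by gcongr
      _ = κ ^ 2 * η ^ 2 * ‖g‖ ^ 2 := by ring
  calc ‖gradient f (θ + v) - (1 - η) • g‖ = ‖gradient f (θ + v) - g - H θ v‖ := by
        rw [hHv, sub_neg_eq_add, sub_smul, one_smul]
        abel_nf
    _ ≤ LH / 2 * ‖v‖ ^ 2 := htaylor
    _ ≤ LH / 2 * (κ ^ 2 * η ^ 2 * ‖g‖ ^ 2) := by gcongr
    _ = LH / 2 * κ ^ 2 * η ^ 2 * ‖g‖ ^ 2 := by ring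

/-- **Gradient after a damped Newton step.** Let `f` be twice continuously
differentiable on an open convex set `U` containing the segment `[θ, θ']`, with
Hessian `H = D(∇f)` that is `L_H`-Lipschitz on `U` in operator norm. If `H(θ)` is
invertible with inverse `Hinv` of norm `≤ κ`, `g = ∇f(θ)`, `p = −H(θ)⁻¹g`, and
`θ' = θ + η·p` with `η > 0`, then `∇f(θ') = (1 − η)·g + r` with
`‖r‖ ≤ (L_H/2)·κ²·η²·‖g‖²`. -/
theorem gradient_after_newton_step
    {n : ℕ} (f : EuclideanSpace ℝ (Fin n) → ℝ)
    (U : Set (EuclideanSpace ℝ (Fin n))) (hU : IsOpen U) (hUconv : Convex ℝ U)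
    (LH κ η : ℝ) (hLH : 0 < LH) (hκ : 0 < κ) (hη : 0 < η)
    (hf : ContDiffOn ℝ 2 f U)
    (hLip : ∀ x ∈ U, ∀ y ∈ U,
      ‖fderiv ℝ (gradient f) x - fderiv ℝ (gradient f) y‖ ≤ LH * ‖x - y‖)
    (θ : EuclideanSpace ℝ (Fin n)) (hθ : θ ∈ U)
    (Hinv : EuclideanSpace ℝ (Fin n) →L[ℝ] EuclideanSpace ℝ (Fin n))
    (hinv₁ : Hinv.comp (fderiv ℝ (gradient f) θ) = ContinuousLinearMap.id ℝ _)
    (hinv₂ : (fderiv ℝ (gradient f) θ).comp Hinv = ContinuousLinearMap.id ℝ _)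
    (hκbound : ‖Hinv‖ ≤ κ)
    (hseg : segment ℝ θ (θ + η • (-(Hinv (gradient f θ)))) ⊆ U) :
    ‖gradient f (θ + η • (-(Hinv (gradient f θ)))) - (1 - η) • gradient f θ‖ ≤
      (LH / 2) * κ ^ 2 * η ^ 2 * ‖gradient f θ‖ ^ 2 :=
  gradient_after_newton_step_general f U hU LH κ η hLH hf hLip θ hθ Hinv hinv₂ hκbound hseg
end

section
/- Let H be a fixed symmetric positive definite n×n real matrix and θ* ∈ ℝ^n. Suppose α_R, α_D : ℝ^n → ℝ are continuous at θ* with α_R(θ*) > 0 and α_D(θ*) > 0, and E_R, E_D : ℝ^n → ℝ^{n×n} satisfy ‖E_R(θ)‖ → 0 and ‖E_D(θ)‖ → 0 as θ → θ*. Define the preconditioned component updates p_R(θ) = −H⁻¹(α_R(θ)·H + E_R(θ))(θ − θ*) and p_D(θ) = −H⁻¹(α_D(θ)·H + E_D(θ))(θ − θ*). Then along any sequence θ_k → θ* with θ_k ≠ θ* (and p_R(θ_k), p_D(θ_k) eventually nonzero), the cosine score satisfies S(p_R(θ_k), p_D(θ_k)) → 1. -/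
/-!
Since `H⁻¹ (α H + E) = α + H⁻¹ E`, both updates at `θ` are `-‖θ - θ*‖` times a vector of the
form `α v + H⁻¹ E v` with the same unit vector `v = (θ - θ*) / ‖θ - θ*‖`. The cosine score does
not see the common factor, and as `H⁻¹ E v → 0` the inner product of the two vectors tends to
`α_R(θ*) α_D(θ*)` while their norms tend to `α_R(θ*)` and `α_D(θ*)`, although `v` itself need
not converge.
-/

open scoped RealInnerProductSpace Topology
open Filter

section Cosine

variable {E ι : Type*} [NormedAddCommGroup E] [InnerProductSpace ℝ E] {l : Filter ι}
  {v e f : ι → E} {α β : ι → ℝ} {a b : ℝ}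

theorem tendsto_norm_smul_add (hv : ∀ k, ‖v k‖ = 1) (hα : Tendsto α l (𝓝 a))
    (he : Tendsto e l (𝓝 0)) : Tendsto (fun k => ‖α k • v k + e k‖) l (𝓝 |a|) := by
  have hsmul : Tendsto (fun k => ‖α k • v k‖) l (𝓝 |a|) := by
    simpa only [norm_smul, hv, mul_one, Real.norm_eq_abs] using hα.abs
  refine hsmul.congr_dist (squeeze_zero (fun _ => dist_nonneg) (fun k => ?_)
    (tendsto_zero_iff_norm_tendsto_zero.1 he))
  simpa only [Real.dist_eq, abs_sub_comm, add_sub_cancel_left] using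
    abs_norm_sub_norm_le (α k • v k + e k) (α k • v k)

theorem tendsto_inner_smul_add_smul_add (hv : ∀ k, ‖v k‖ = 1) (hα : Tendsto α l (𝓝 a))
    (hβ : Tendsto β l (𝓝 b)) (he : Tendsto e l (𝓝 0)) (hf : Tendsto f l (𝓝 0)) :
    Tendsto (fun k => ⟪α k • v k + e k, β k • v k + f k⟫) l (𝓝 (a * b)) := by
  have hunit {g : ι → E} (hg : Tendsto g l (𝓝 0)) : Tendsto (fun k => ⟪v k, g k⟫) l (𝓝 0) :=
    squeeze_zero_norm (fun k => (norm_inner_le_norm _ _).trans_eq (by rw [hv, one_mul]))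
      (tendsto_zero_iff_norm_tendsto_zero.1 hg)
  have hsum := (((hα.mul hβ).add (hα.mul (hunit hf))).add (hβ.mul (hunit he))).add
    (he.inner hf)
  simp only [mul_zero, add_zero, inner_zero_left] at hsum
  refine hsum.congr fun k => ?_
  simp only [inner_add_left, inner_add_right, real_inner_smul_left, real_inner_smul_right,
    real_inner_self_eq_norm_sq, hv, real_inner_comm (e k) (v k)]
  ring

theorem tendsto_cosine_smul_add_smul_add (hv : ∀ k, ‖v k‖ = 1) (hα : Tendsto α l (𝓝 a))
    (hβ : Tendsto β l (𝓝 b)) (ha : 0 < a) (hb : 0 < b) (he : Tendsto e l (𝓝 0))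
    (hf : Tendsto f l (𝓝 0)) :
    Tendsto (fun k => ⟪α k • v k + e k, β k • v k + f k⟫ /
      (‖α k • v k + e k‖ * ‖β k • v k + f k‖)) l (𝓝 1) := by
  have h := (tendsto_inner_smul_add_smul_add hv hα hβ he hf).div
    ((tendsto_norm_smul_add hv hα he).mul (tendsto_norm_smul_add hv hβ hf)) (by positivity)
  rwa [abs_of_pos ha, abs_of_pos hb, div_self (by positivity)] at h

theorem real_inner_div_norm_mul_norm_neg_smul {r : ℝ} (hr : r ≠ 0) (x y : E) :
    ⟪-(r • x), -(r • y)⟫ / (‖-(r • x)‖ * ‖-(r • y)‖) = ⟪x, y⟫ / (‖x‖ * ‖y‖) := by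
  rw [← InnerProductGeometry.cos_angle, ← InnerProductGeometry.cos_angle,
    InnerProductGeometry.angle_neg_neg, InnerProductGeometry.angle_smul_smul hr]

end Cosine

section Matrix

variable {𝕜 m ι : Type*} [RCLike 𝕜] [Fintype m] [DecidableEq m]

theorem Matrix.toEuclideanLin_inv_mul_smul_add {H : Matrix m m 𝕜} (hH : IsUnit H.det)
    (c : 𝕜) (E : Matrix m m 𝕜) (x : EuclideanSpace 𝕜 m) :
    Matrix.toEuclideanLin (H⁻¹ * (c • H + E)) x = c • x + Matrix.toEuclideanLin (H⁻¹ * E) x := by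
  rw [mul_add, Matrix.mul_smul, Matrix.nonsing_inv_mul H hH, map_add, map_smul]
  simp

theorem Matrix.toEuclideanLin_inv_mul_smul_add_eq_norm_smul {H : Matrix m m ℝ}
    (hH : IsUnit H.det) (c : ℝ) (E : Matrix m m ℝ) (x : EuclideanSpace ℝ m) :
    Matrix.toEuclideanLin (H⁻¹ * (c • H + E)) x =
      ‖x‖ • (c • (‖x‖⁻¹ • x) + Matrix.toEuclideanLin (H⁻¹ * E) (‖x‖⁻¹ • x)) := by
  rcases eq_or_ne x 0 with rfl | hx
  · simp
  rw [smul_add, map_smul, smul_inv_smul₀ (norm_ne_zero_iff.mpr hx), smul_comm ‖x‖ c,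
    smul_inv_smul₀ (norm_ne_zero_iff.mpr hx), Matrix.toEuclideanLin_inv_mul_smul_add hH]

theorem Matrix.tendsto_toEuclideanLin_apply_zero {l : Filter ι} {M : ι → Matrix m m 𝕜}
    (hM : Tendsto M l (𝓝 0)) {v : ι → EuclideanSpace 𝕜 m} (hv : ∀ k, ‖v k‖ ≤ 1) :
    Tendsto (fun k => Matrix.toEuclideanLin (M k) (v k)) l (𝓝 0) := by
  have hcont : Continuous (Matrix.toEuclideanCLM (n := m) (𝕜 := 𝕜)) :=
    (Matrix.toEuclideanCLM (n := m) (𝕜 := 𝕜)).toAlgEquiv.toLinearMap.continuous_of_finiteDimensional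
  have hCLM := (hcont.tendsto 0).comp hM
  rw [map_zero] at hCLM
  refine squeeze_zero_norm (fun k => ?_) (tendsto_zero_iff_norm_tendsto_zero.1 hCLM)
  rw [← Matrix.coe_toEuclideanCLM_eq_toEuclideanLin]
  exact ((Matrix.toEuclideanCLM (n := m) (𝕜 := 𝕜) (M k)).le_opNorm (v k)).trans
    (mul_le_of_le_one_right (norm_nonneg _) (hv k))

end Matrix

theorem newton_aligns_component_steps_general
    {n : ℕ} (H : Matrix (Fin n) (Fin n) ℝ) (hH : H.PosDef)
    (θstar : EuclideanSpace ℝ (Fin n))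
    (αR αD : EuclideanSpace ℝ (Fin n) → ℝ)
    (hαRcont : ContinuousAt αR θstar) (hαDcont : ContinuousAt αD θstar)
    (hαRpos : 0 < αR θstar) (hαDpos : 0 < αD θstar)
    (ER ED : EuclideanSpace ℝ (Fin n) → Matrix (Fin n) (Fin n) ℝ)
    (hER : Tendsto ER (𝓝 θstar) (𝓝 0)) (hED : Tendsto ED (𝓝 θstar) (𝓝 0))
    (pR pD : EuclideanSpace ℝ (Fin n) → EuclideanSpace ℝ (Fin n))
    (hpR : ∀ θ, pR θ =
      -(Matrix.toEuclideanLin (H⁻¹ * (αR θ • H + ER θ)) (θ - θstar)))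
    (hpD : ∀ θ, pD θ =
      -(Matrix.toEuclideanLin (H⁻¹ * (αD θ • H + ED θ)) (θ - θstar)))
    (θ : ℕ → EuclideanSpace ℝ (Fin n))
    (hne : ∀ k, θ k ≠ θstar)
    (hθ : Tendsto θ atTop (𝓝 θstar)) :
    Tendsto (fun k => ⟪pR (θ k), pD (θ k)⟫ / (‖pR (θ k)‖ * ‖pD (θ k)‖))
      atTop (𝓝 1) := by
  set v : ℕ → EuclideanSpace ℝ (Fin n) := fun k => ‖θ k - θstar‖⁻¹ • (θ k - θstar)
  have hv : ∀ k, ‖v k‖ = 1 := fun k => norm_smul_inv_norm (sub_ne_zero.mpr (hne k))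
  have hdet : IsUnit H.det := isUnit_iff_ne_zero.mpr hH.det_pos.ne'
  have hscore : ∀ k, ⟪pR (θ k), pD (θ k)⟫ / (‖pR (θ k)‖ * ‖pD (θ k)‖) =
      ⟪αR (θ k) • v k + Matrix.toEuclideanLin (H⁻¹ * ER (θ k)) (v k),
        αD (θ k) • v k + Matrix.toEuclideanLin (H⁻¹ * ED (θ k)) (v k)⟫ /
      (‖αR (θ k) • v k + Matrix.toEuclideanLin (H⁻¹ * ER (θ k)) (v k)‖ *
        ‖αD (θ k) • v k + Matrix.toEuclideanLin (H⁻¹ * ED (θ k)) (v k)‖) := fun k => by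
    rw [hpR, hpD, Matrix.toEuclideanLin_inv_mul_smul_add_eq_norm_smul hdet,
      Matrix.toEuclideanLin_inv_mul_smul_add_eq_norm_smul hdet,
      real_inner_div_norm_mul_norm_neg_smul (norm_ne_zero_iff.mpr (sub_ne_zero.mpr (hne k)))]
  have herr {E : EuclideanSpace ℝ (Fin n) → Matrix (Fin n) (Fin n) ℝ}
      (hE : Tendsto E (𝓝 θstar) (𝓝 0)) :
      Tendsto (fun k => Matrix.toEuclideanLin (H⁻¹ * E (θ k)) (v k)) atTop (𝓝 0) := by
    refine Matrix.tendsto_toEuclideanLin_apply_zero ?_ (fun k => (hv k).le)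
    have h := (hE.comp hθ).const_mul H⁻¹
    rwa [mul_zero] at h
  rw [funext hscore]
  exact tendsto_cosine_smul_add_smul_add hv (hαRcont.tendsto.comp hθ)
    (hαDcont.tendsto.comp hθ) hαRpos hαDpos (herr hER) (herr hED)

/-- **Newton preconditioning aligns component steps near the optimum.** Let `H` be a
fixed symmetric positive definite matrix, `α_R, α_D` continuous at `θ*` with positive
values there, and `E_R, E_D` matrix-valued error terms vanishing at `θ*`. With the
preconditioned component updates `p_R(θ) = −H⁻¹(α_R(θ)H + E_R(θ))(θ − θ*)` and
`p_D(θ) = −H⁻¹(α_D(θ)H + E_D(θ))(θ − θ*)`, along any sequence `θ_k → θ*` with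
`θ_k ≠ θ*` (and the two updates eventually nonzero), the cosine score
`S(p_R(θ_k), p_D(θ_k))` converges to `1`. -/
theorem newton_aligns_component_steps
    {n : ℕ} (H : Matrix (Fin n) (Fin n) ℝ) (hH : H.PosDef)
    (θstar : EuclideanSpace ℝ (Fin n))
    (αR αD : EuclideanSpace ℝ (Fin n) → ℝ)
    (hαRcont : ContinuousAt αR θstar) (hαDcont : ContinuousAt αD θstar)
    (hαRpos : 0 < αR θstar) (hαDpos : 0 < αD θstar)
    (ER ED : EuclideanSpace ℝ (Fin n) → Matrix (Fin n) (Fin n) ℝ)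
    (hER : Tendsto ER (𝓝 θstar) (𝓝 0)) (hED : Tendsto ED (𝓝 θstar) (𝓝 0))
    (pR pD : EuclideanSpace ℝ (Fin n) → EuclideanSpace ℝ (Fin n))
    (hpR : ∀ θ, pR θ =
      -(Matrix.toEuclideanLin (H⁻¹ * (αR θ • H + ER θ)) (θ - θstar)))
    (hpD : ∀ θ, pD θ =
      -(Matrix.toEuclideanLin (H⁻¹ * (αD θ • H + ED θ)) (θ - θstar)))
    (θ : ℕ → EuclideanSpace ℝ (Fin n))
    (hne : ∀ k, θ k ≠ θstar)
    (hθ : Tendsto θ atTop (𝓝 θstar))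
    (hpRne : ∀ᶠ k in atTop, pR (θ k) ≠ 0)
    (hpDne : ∀ᶠ k in atTop, pD (θ k) ≠ 0) :
    Tendsto (fun k => ⟪pR (θ k), pD (θ k)⟫ / (‖pR (θ k)‖ * ‖pD (θ k)‖))
      atTop (𝓝 1) :=
  newton_aligns_component_steps_general H hH θstar αR αD hαRcont hαDcont hαRpos hαDpos ER ED hER hED
    pR pD hpR hpD θ hne hθ
end

section
/- Let ((w_{e,i}, w_{d,i}))_{i∈ℕ} be an i.i.d. sequence of pairs of independent standard Gaussian random variables. For each M ≥ 1 define u_R^{(M)} ∈ ℝ^{2M} = (sign(w_{e,1}), …, sign(w_{e,M}), 0, …, 0) and u_D^{(M)} ∈ ℝ^{2M} = (−sign(w_{d,1}), …, −sign(w_{d,M}), −sign(w_{e,1}), …, −sign(w_{e,M})). Then almost surely all coordinates are nonzero for every M, both vectors are nonzero, and the cosine score S(u_R^{(M)}, u_D^{(M)}) converges to 0 almost surely as M → ∞. -/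
/-!
Almost surely no weight vanishes, so every coordinate of `u_R` and `u_D` is `±1` where it is
nonzero: `‖u_R‖ = √M`, `‖u_D‖ = √(2M)` and `⟪u_R, u_D⟫ = -∑ sign(w_{e,i}) sign(w_{d,i})`.
The cosine score is therefore `-1/√2` times the empirical mean of the i.i.d. bounded variables
`sign(w_{e,i}) sign(w_{d,i})`, whose expectation is `E[sign w_e] E[sign w_d] = 0` by
independence and the symmetry of the Gaussian; the strong law of large numbers concludes.
-/

open scoped RealInnerProductSpace
open MeasureTheory ProbabilityTheory Filter

/-- Adam's sign-like initial update for the rate gradient: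
`u_R = (sign(w_e), 0) ∈ ℝ^{2M}`. -/
noncomputable def uR {M : ℕ} (we : Fin M → ℝ) : EuclideanSpace ℝ (Fin M ⊕ Fin M) :=
  (WithLp.equiv 2 (Fin M ⊕ Fin M → ℝ)).symm
    (Sum.elim (fun i => Real.sign (we i)) (fun _ => 0))

/-- Adam's sign-like initial update for the distortion gradient:
`u_D = (−sign(w_d), −sign(w_e)) ∈ ℝ^{2M}`. -/
noncomputable def uD {M : ℕ} (we wd : Fin M → ℝ) : EuclideanSpace ℝ (Fin M ⊕ Fin M) :=
  (WithLp.equiv 2 (Fin M ⊕ Fin M → ℝ)).symm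
    (Sum.elim (fun i => -Real.sign (wd i)) (fun i => -Real.sign (we i)))

open Finset Topology

lemma Real.measurable_sign : Measurable Real.sign :=
  Measurable.ite measurableSet_Iio measurable_const <|
    Measurable.ite measurableSet_Ioi measurable_const measurable_const

lemma Real.abs_sign_le_one (r : ℝ) : |Real.sign r| ≤ 1 := by
  rcases Real.sign_apply_eq r with h | h | h <;> simp [h]

lemma Real.sign_sq_of_ne_zero {r : ℝ} (hr : r ≠ 0) : Real.sign r ^ 2 = 1 := by
  rcases Real.sign_apply_eq_of_ne_zero r hr with h | h <;> simp [h]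

lemma integral_sign_eq_zero_of_map_neg {ν : Measure ℝ} (hν : ν.map (fun x => -x) = ν) :
    ∫ x, Real.sign x ∂ν = 0 := by
  have hsymm : ∫ x, Real.sign x ∂ν = ∫ x, Real.sign (-x) ∂ν := by
    conv_lhs => rw [← hν]
    exact integral_map measurable_neg.aemeasurable Real.measurable_sign.aestronglyMeasurable
  simp only [Real.sign_neg, integral_neg] at hsymm
  linarith

section SignVectors

variable {M : ℕ} {we wd : Fin M → ℝ}

lemma norm_uR (hwe : ∀ i, we i ≠ 0) : ‖uR we‖ = √M := by
  simp [EuclideanSpace.norm_eq, uR, Fintype.sum_sum_type, Real.sign_sq_of_ne_zero, hwe]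

lemma norm_uD (hwe : ∀ i, we i ≠ 0) (hwd : ∀ i, wd i ≠ 0) : ‖uD we wd‖ = √(2 * M) := by
  simp [EuclideanSpace.norm_eq, uD, Fintype.sum_sum_type, Real.sign_sq_of_ne_zero, hwe, hwd,
    ← two_mul]

lemma inner_uR_uD : ⟪uR we, uD we wd⟫ = -∑ i, Real.sign (we i) * Real.sign (wd i) := by
  simp [PiLp.inner_apply, Fintype.sum_sum_type, uR, uD, mul_comm]

lemma inner_div_norm_mul_norm_uR_uD (hwe : ∀ i, we i ≠ 0) (hwd : ∀ i, wd i ≠ 0) :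
    ⟪uR we, uD we wd⟫ / (‖uR we‖ * ‖uD we wd‖) =
      -((∑ i, Real.sign (we i) * Real.sign (wd i)) / M) / √2 := by
  rw [inner_uR_uD, norm_uR hwe, norm_uD hwe hwd, Real.sqrt_mul zero_le_two, mul_left_comm,
    Real.mul_self_sqrt (Nat.cast_nonneg M)]
  ring

end SignVectors

namespace ProbabilityTheory

variable {Ω : Type*} [MeasurableSpace Ω] {μ : Measure Ω} {ν : Measure ℝ}

lemma HasLaw.ae_ne {𝓧 : Type*} [MeasurableSpace 𝓧] {ρ : Measure 𝓧} [NullSingletonClass ρ]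
    {X : Ω → 𝓧} (hX : HasLaw X ρ μ) (a : 𝓧) : ∀ᵐ ω ∂μ, X ω ≠ a :=
  ae_of_ae_map hX.aemeasurable (hX.map_eq ▸ ρ.ae_ne a)

lemma IndepFun.integral_sign_mul_sign_eq_zero {X Y : Ω → ℝ} (hXY : IndepFun X Y μ)
    (hX : HasLaw X ν μ) (hY : AEMeasurable Y μ) (hν : ν.map (fun x => -x) = ν) :
    ∫ ω, Real.sign (X ω) * Real.sign (Y ω) ∂μ = 0 := by
  refine ((hXY.comp Real.measurable_sign Real.measurable_sign).integral_fun_mul_eq_mul_integral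
    (Real.measurable_sign.comp_aemeasurable hX.aemeasurable).aestronglyMeasurable
    (Real.measurable_sign.comp_aemeasurable hY).aestronglyMeasurable).trans ?_
  rw [hX.integral_comp Real.measurable_sign.aestronglyMeasurable,
    integral_sign_eq_zero_of_map_neg hν, zero_mul]

variable {X Y : ℕ → Ω → ℝ}

lemma iIndepFun.hasLaw_prodMk_sum_elim [IsProbabilityMeasure μ]
    (hXY : iIndepFun (Sum.elim X Y) μ) (hlaw : ∀ j, HasLaw (Sum.elim X Y j) ν μ) (i : ℕ) :
    HasLaw (fun ω => (X i ω, Y i ω)) (ν.prod ν) μ :=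
  (hXY.indepFun Sum.inl_ne_inr).hasLaw_prod (hlaw (.inl i)) (hlaw (.inr i))

lemma iIndepFun.pairwise_indepFun_comp_prodMk_sum_elim (hXY : iIndepFun (Sum.elim X Y) μ)
    (hlaw : ∀ j, HasLaw (Sum.elim X Y j) ν μ) {g : ℝ × ℝ → ℝ} (hg : Measurable g) :
    Pairwise (Function.onFun (IndepFun · · μ) fun i ω => g (X i ω, Y i ω)) := by
  intro i j hij
  exact (hXY.indepFun_prodMk_prodMk₀ (fun k => (hlaw k).aemeasurable) (.inl i) (.inr i) (.inl j)
    (.inr j) (by simpa using hij) Sum.inl_ne_inr Sum.inr_ne_inl (by simpa using hij)).comp hg hg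

lemma iIndepFun.ae_tendsto_avg_sign_mul_sign [IsProbabilityMeasure μ]
    (hXY : iIndepFun (Sum.elim X Y) μ) (hlaw : ∀ j, HasLaw (Sum.elim X Y j) ν μ)
    (hν : ν.map (fun x => -x) = ν) :
    ∀ᵐ ω ∂μ, Tendsto (fun n : ℕ => (∑ i ∈ range n, Real.sign (X i ω) * Real.sign (Y i ω)) / n)
      atTop (𝓝 0) := by
  let g : ℝ × ℝ → ℝ := fun p => Real.sign p.1 * Real.sign p.2
  have hg : Measurable g :=
    (Real.measurable_sign.comp measurable_fst).mul (Real.measurable_sign.comp measurable_snd)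
  have hident (i : ℕ) :
      IdentDistrib (fun ω => g (X i ω, Y i ω)) (fun ω => g (X 0 ω, Y 0 ω)) μ μ :=
    ((hXY.hasLaw_prodMk_sum_elim hlaw i).identDistrib
      (hXY.hasLaw_prodMk_sum_elim hlaw 0)).comp hg
  have hint : Integrable (fun ω => g (X 0 ω, Y 0 ω)) μ := by
    refine Integrable.of_bound
      (hg.comp_aemeasurable (hXY.hasLaw_prodMk_sum_elim hlaw 0).aemeasurable).aestronglyMeasurable
      1 (ae_of_all _ fun ω => ?_)
    simpa [g, abs_mul] using mul_le_one₀ (Real.abs_sign_le_one (X 0 ω)) (abs_nonneg _)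
      (Real.abs_sign_le_one (Y 0 ω))
  have hmean : μ[fun ω => g (X 0 ω, Y 0 ω)] = 0 :=
    (hXY.indepFun (Sum.inl_ne_inr (a := 0) (b := 0))).integral_sign_mul_sign_eq_zero
      (hlaw (.inl 0)) (hlaw (.inr 0)).aemeasurable hν
  simpa [hmean] using strong_law_ae_real _ hint
    (hXY.pairwise_indepFun_comp_prodMk_sum_elim hlaw hg) hident

end ProbabilityTheory

theorem adam_updates_asymptotically_orthogonal_general
    {Ω : Type*} [MeasurableSpace Ω] (μ : Measure Ω) [IsProbabilityMeasure μ]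
    (we wd : ℕ → Ω → ℝ)
    (hindep : iIndepFun (Sum.elim we wd) μ)
    (hlaw : ∀ j : ℕ ⊕ ℕ, Measure.map (Sum.elim we wd j) μ = gaussianReal 0 1) :
    ∀ᵐ ω ∂μ,
      (∀ i, we i ω ≠ 0) ∧ (∀ i, wd i ω ≠ 0) ∧
      (∀ M : ℕ, 1 ≤ M →
        uR (fun i : Fin M => we i ω) ≠ 0 ∧
        uD (fun i : Fin M => we i ω) (fun i : Fin M => wd i ω) ≠ 0) ∧
      Tendsto
        (fun M : ℕ =>
          ⟪uR (fun i : Fin M => we i ω),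
              uD (fun i : Fin M => we i ω) (fun i : Fin M => wd i ω)⟫ /
            (‖uR (fun i : Fin M => we i ω)‖ *
              ‖uD (fun i : Fin M => we i ω) (fun i : Fin M => wd i ω)‖))
        atTop (nhds 0) := by
  have hgauss (j : ℕ ⊕ ℕ) : HasLaw (Sum.elim we wd j) (gaussianReal 0 1) μ :=
    ⟨.of_map_ne_zero (hlaw j ▸ IsProbabilityMeasure.ne_zero _), hlaw j⟩
  have := nullSingletonClass_gaussianReal (μ := 0) one_ne_zero
  have hnonzero : ∀ᵐ ω ∂μ, ∀ j, Sum.elim we wd j ω ≠ 0 :=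
    ae_all_iff.2 fun j => (hgauss j).ae_ne 0
  filter_upwards [hnonzero, hindep.ae_tendsto_avg_sign_mul_sign hgauss
    (by simpa using gaussianReal_map_neg (μ := 0) (v := 1))] with ω hne havg
  have hwe (i : ℕ) : we i ω ≠ 0 := hne (.inl i)
  have hwd (i : ℕ) : wd i ω ≠ 0 := hne (.inr i)
  refine ⟨hwe, hwd, fun M hM => ⟨?_, ?_⟩, ?_⟩
  · rw [← norm_ne_zero_iff, norm_uR fun i => hwe i]
    positivity
  · rw [← norm_ne_zero_iff, norm_uD (fun i => hwe i) fun i => hwd i]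
    positivity
  · simp_rw [inner_div_norm_mul_norm_uR_uD (fun i => hwe i) (fun i => hwd i),
      Fin.sum_univ_eq_sum_range (fun i => Real.sign (we i ω) * Real.sign (wd i ω))]
    simpa [neg_div] using (havg.div_const √2).neg

/-- **Asymptotic orthogonality of Adam's rate and distortion updates under i.i.d.
Gaussian initialization.** If the encoder and decoder weights `(w_{e,i}, w_{d,i})`
form an i.i.d. family of independent standard Gaussians, then almost surely all
coordinates are nonzero, the sign-update vectors `u_R^{(M)}, u_D^{(M)}` are nonzero
for every `M ≥ 1`, and their cosine score converges to `0` as `M → ∞`. -/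
theorem adam_updates_asymptotically_orthogonal
    {Ω : Type*} [MeasurableSpace Ω] (μ : Measure Ω) [IsProbabilityMeasure μ]
    (we wd : ℕ → Ω → ℝ)
    (hmeas_e : ∀ i, Measurable (we i)) (hmeas_d : ∀ i, Measurable (wd i))
    (hindep : iIndepFun (Sum.elim we wd) μ)
    (hlaw : ∀ j : ℕ ⊕ ℕ, Measure.map (Sum.elim we wd j) μ = gaussianReal 0 1) :
    ∀ᵐ ω ∂μ,
      (∀ i, we i ω ≠ 0) ∧ (∀ i, wd i ω ≠ 0) ∧
      (∀ M : ℕ, 1 ≤ M →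
        uR (fun i : Fin M => we i ω) ≠ 0 ∧
        uD (fun i : Fin M => we i ω) (fun i : Fin M => wd i ω) ≠ 0) ∧
      Tendsto
        (fun M : ℕ =>
          ⟪uR (fun i : Fin M => we i ω),
              uD (fun i : Fin M => we i ω) (fun i : Fin M => wd i ω)⟫ /
            (‖uR (fun i : Fin M => we i ω)‖ *
              ‖uD (fun i : Fin M => we i ω) (fun i : Fin M => wd i ω)‖))
        atTop (nhds 0) :=
  adam_updates_asymptotically_orthogonal_general μ we wd hindep hlaw
end

section
/- Let B be a symmetric positive definite n×n real matrix and q ∈ ℝ^n a nonzero vector with u = q/‖q‖, μ₁ = uᵀBu, μ₂ = uᵀB²u. Then as η → 0⁺, (1 − S(q, (I − ηB)q))/η² converges to (1/2)(μ₂ − μ₁²); that is, the inter-step cosine deviates from 1 at second order in η, with coefficient equal to half the directional variance of B: S(q, (I − ηB)q) = 1 − (1/2)η²(μ₂ − μ₁²) + o(η²). -/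
/-!
Write `D = ‖q‖ ‖q - ηBq‖` and `P = ⟪q, q - ηBq⟫`. Then `1 - P/D = (D² - P²)/(D(D + P))`, and
`D² - P²` is the Gram determinant of `(q, q - ηBq)`, which equals `η²` times the Gram determinant
of `(q, Bq)`. After dividing by `η²` what remains is continuous at `η = 0`, with value
`Gram(q, Bq)/(2‖q‖⁴)`; for symmetric `B` this is half the directional variance of `B` at
`u = q/‖q‖`, since `⟪u, B²u⟫ = ‖Bu‖²`.
-/

open scoped RealInnerProductSpace Topology
open Filter

theorem one_sub_div_div_sq_eq_of_sq_sub_sq {K : Type*} [Field K] {D P G η : K} (hD : D ≠ 0)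
    (hDP : D + P ≠ 0) (hη : η ≠ 0) (h : D ^ 2 - P ^ 2 = η ^ 2 * G) :
    (1 - P / D) / η ^ 2 = G / (D * (D + P)) := by
  rw [div_eq_div_iff (by simp [hη]) (mul_ne_zero hD hDP)]
  field_simp
  linear_combination h

section InnerProductSpace

variable {E : Type*} [NormedAddCommGroup E] [InnerProductSpace ℝ E]

theorem gram_det_sub_smul (x v : E) (η : ℝ) :
    (‖x‖ * ‖x - η • v‖) ^ 2 - ⟪x, x - η • v⟫ ^ 2 =
      η ^ 2 * (‖x‖ ^ 2 * ‖v‖ ^ 2 - ⟪x, v⟫ ^ 2) := by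
  rw [mul_pow, norm_sub_sq_real, inner_sub_right, real_inner_smul_right, norm_smul,
    real_inner_self_eq_norm_sq, mul_pow, Real.norm_eq_abs, sq_abs]
  ring

theorem tendsto_one_sub_cos_sub_smul_div_sq {q : E} (hq : q ≠ 0) (v : E) :
    Tendsto (fun η : ℝ => (1 - ⟪q, q - η • v⟫ / (‖q‖ * ‖q - η • v‖)) / η ^ 2) (𝓝[≠] 0)
      (𝓝 ((‖q‖ ^ 2 * ‖v‖ ^ 2 - ⟪q, v⟫ ^ 2) / (2 * ‖q‖ ^ 4))) := by
  set D : ℝ → ℝ := fun η => ‖q‖ * ‖q - η • v‖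
  set P : ℝ → ℝ := fun η => ⟪q, q - η • v⟫
  set G := ‖q‖ ^ 2 * ‖v‖ ^ 2 - ⟪q, v⟫ ^ 2
  have hq' : 0 < ‖q‖ := norm_pos_iff.mpr hq
  have hD : Continuous D := by fun_prop
  have hP : Continuous P := by fun_prop
  have hD0 : D 0 = ‖q‖ ^ 2 := by simp [D, sq]
  have hP0 : P 0 = ‖q‖ ^ 2 := by simp [P]
  have hlim : Tendsto (fun η => G / (D η * (D η + P η))) (𝓝 0) (𝓝 (G / (2 * ‖q‖ ^ 4))) := by
    have h0 : D 0 * (D 0 + P 0) = 2 * ‖q‖ ^ 4 := by rw [hD0, hP0]; ring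
    rw [← h0]
    exact tendsto_const_nhds.div ((hD.tendsto 0).mul ((hD.tendsto 0).add (hP.tendsto 0)))
      (by rw [h0]; positivity)
  have hpos : ∀ᶠ η in 𝓝 (0 : ℝ), 0 < D η ∧ 0 < D η + P η := by
    refine ((hD.tendsto 0).eventually (eventually_gt_nhds ?_)).and
      (((hD.add hP).tendsto 0).eventually (eventually_gt_nhds ?_)) <;>
    simp only [Pi.add_apply, hD0, hP0] <;> positivity
  refine (hlim.mono_left nhdsWithin_le_nhds).congr' ?_
  filter_upwards [nhdsWithin_le_nhds hpos, self_mem_nhdsWithin] with η ⟨hDη, hDPη⟩ hη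
  exact (one_sub_div_div_sq_eq_of_sq_sub_sq hDη.ne' hDPη.ne' hη (gram_det_sub_smul q v η)).symm

theorem LinearMap.IsSymmetric.half_variance_normalize_eq {A : E →ₗ[ℝ] E} (hA : A.IsSymmetric)
    {q : E} (hq : q ≠ 0) :
    1 / 2 * (⟪‖q‖⁻¹ • q, A (A (‖q‖⁻¹ • q))⟫ - ⟪‖q‖⁻¹ • q, A (‖q‖⁻¹ • q)⟫ ^ 2) =
      (‖q‖ ^ 2 * ‖A q‖ ^ 2 - ⟪q, A q⟫ ^ 2) / (2 * ‖q‖ ^ 4) := by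
  have hq' : ‖q‖ ≠ 0 := norm_ne_zero_iff.mpr hq
  simp only [map_smul, real_inner_smul_left, real_inner_smul_right, ← hA q (A q),
    real_inner_self_eq_norm_sq]
  field_simp

end InnerProductSpace

/-- **Second-order expansion of the inter-step cosine.** For a symmetric positive
definite matrix `B` and nonzero `q` with `u = q/‖q‖`, `μ₁ = uᵀBu`, `μ₂ = uᵀB²u`, as
`η → 0⁺` the quantity `(1 − S(q, (I − ηB)q))/η²` converges to `(1/2)(μ₂ − μ₁²)`;
i.e. the inter-step cosine deviates from `1` at second order in `η`, with coefficient
half the directional variance of `B`. -/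
theorem inter_step_cosine_second_order
    {n : ℕ} (B : Matrix (Fin n) (Fin n) ℝ) (hB : B.PosDef)
    (q : EuclideanSpace ℝ (Fin n)) (hq : q ≠ 0) :
    Filter.Tendsto
      (fun η : ℝ =>
        (1 - ⟪q, Matrix.toEuclideanLin ((1 : Matrix (Fin n) (Fin n) ℝ) - η • B) q⟫ /
            (‖q‖ * ‖Matrix.toEuclideanLin ((1 : Matrix (Fin n) (Fin n) ℝ) - η • B) q‖)) / η ^ 2)
      (𝓝[>] 0)
      (𝓝 ((1 / 2) * (⟪‖q‖⁻¹ • q, Matrix.toEuclideanLin (B * B) (‖q‖⁻¹ • q)⟫ -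
        ⟪‖q‖⁻¹ • q, Matrix.toEuclideanLin B (‖q‖⁻¹ • q)⟫ ^ 2))) := by
  have hA : (Matrix.toEuclideanLin B).IsSymmetric :=
    Matrix.isSymmetric_toEuclideanLin_iff.mpr hB.isHermitian
  rw [Matrix.toLpLin_mul_same, LinearMap.comp_apply, hA.half_variance_normalize_eq hq]
  simp only [map_sub, map_smul, Matrix.toLpLin_one, LinearMap.sub_apply, LinearMap.smul_apply,
    LinearMap.id_apply]
  exact (tendsto_one_sub_cos_sub_smul_div_sq hq _).mono_left
    (nhdsWithin_mono 0 fun _ hη => ne_of_gt hη)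
end

section
/- Let 𝓛 : ℝ^n → ℝ be differentiable with L-Lipschitz gradient (L-smooth), let P be a symmetric positive definite n×n matrix whose eigenvalues all lie in [μ, M] with 0 < μ ≤ M, let θ ∈ ℝ^n, and let p_R, p_D ∈ ℝ^n be nonzero vectors such that p := p_R + p_D = −P·∇𝓛(θ). Then for any learning rate 0 < η < 2/(L·M), the one-step loss reduction satisfies 𝓛(θ) − 𝓛(θ + η·p) ≥ C(η)·(‖p_R‖² + ‖p_D‖² + 2·‖p_R‖·‖p_D‖·S(p_R, p_D)), where C(η) = η/M − L·η²/2 > 0. In particular, the guaranteed loss reduction is strictly increasing in the intra-step cosine S(p_R, p_D). -/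
/-!
The descent lemma for an `L`-smooth function gives
`𝓛(θ) − 𝓛(θ + η p) ≥ η ⟪g, P g⟫ − (L η² / 2) ‖P g‖²` for `p = −P g`, `g = ∇𝓛(θ)`.
Cauchy–Schwarz for the positive form `(x, y) ↦ ⟪x, P y⟫`, applied to `g` and `P g`, gives
`‖P g‖⁴ ≤ ⟪g, P g⟫ ⟪P g, P² g⟫ ≤ M ⟪g, P g⟫ ‖P g‖²`, i.e. `‖P g‖² ≤ M ⟪g, P g⟫`, so the reduction is
at least `C(η) ‖p‖²`. Finally `‖p‖² = ‖p_R + p_D‖²` expands by the law of cosines.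
-/

open scoped RealInnerProductSpace

open InnerProductGeometry

section Descent

variable {E : Type*} [NormedAddCommGroup E] [InnerProductSpace ℝ E] [CompleteSpace E]

theorem hasDerivAt_apply_add_smul {f : E → ℝ} (hf : Differentiable ℝ f) (x v : E) (t : ℝ) :
    HasDerivAt (fun t : ℝ => f (x + t • v)) ⟪gradient f (x + t • v), v⟫ t := by
  have hline : HasDerivAt (fun t : ℝ => x + t • v) v t := by
    simpa using ((hasDerivAt_id t).smul_const v).const_add x
  exact (hf _).hasGradientAt.hasFDerivAt.comp_hasDerivAt t hline

theorem inner_gradient_sub_le_of_lipschitz {f : E → ℝ} {L : ℝ}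
    (hlip : ∀ x y, ‖gradient f x - gradient f y‖ ≤ L * ‖x - y‖) (x v : E) {t : ℝ} (ht : 0 ≤ t) :
    ⟪gradient f (x + t • v) - gradient f x, v⟫ ≤ L * ‖v‖ ^ 2 * t :=
  calc ⟪gradient f (x + t • v) - gradient f x, v⟫
      ≤ ‖gradient f (x + t • v) - gradient f x‖ * ‖v‖ := real_inner_le_norm _ _
    _ ≤ L * ‖x + t • v - x‖ * ‖v‖ := by gcongr; exact hlip _ _
    _ = L * ‖v‖ ^ 2 * t := by
      rw [add_sub_cancel_left, norm_smul, Real.norm_of_nonneg ht]; ring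

theorem apply_add_le_of_lipschitz_gradient {f : E → ℝ} {L : ℝ} (hf : Differentiable ℝ f)
    (hlip : ∀ x y, ‖gradient f x - gradient f y‖ ≤ L * ‖x - y‖) (x v : E) :
    f (x + v) ≤ f x + ⟪gradient f x, v⟫ + L / 2 * ‖v‖ ^ 2 := by
  set φ : ℝ → ℝ := fun t => f (x + t • v) - f x - t * ⟪gradient f x, v⟫
  set B : ℝ → ℝ := fun t => L / 2 * ‖v‖ ^ 2 * t ^ 2
  have hφ (t : ℝ) : HasDerivAt φ ⟪gradient f (x + t • v) - gradient f x, v⟫ t := by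
    rw [inner_sub_left]
    exact ((hasDerivAt_apply_add_smul hf x v t).sub_const (f x)).sub
      (by simpa using (hasDerivAt_id t).mul_const ⟪gradient f x, v⟫)
  have hB (t : ℝ) : HasDerivAt B (L * ‖v‖ ^ 2 * t) t :=
    ((hasDerivAt_pow 2 t).const_mul (L / 2 * ‖v‖ ^ 2)).congr_deriv (by norm_num; ring)
  have hφB : φ 1 ≤ B 1 :=
    image_le_of_deriv_right_le_deriv_boundary (a := 0) (b := 1)
      (fun t _ => (hφ t).continuousAt.continuousWithinAt)
      (fun t _ => (hφ t).hasDerivWithinAt) (by simp [φ, B])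
      (fun t _ => (hB t).continuousAt.continuousWithinAt)
      (fun t _ => (hB t).hasDerivWithinAt)
      (fun t ht => inner_gradient_sub_le_of_lipschitz hlip x v ht.1) (by simp)
  simp only [φ, B, one_smul, one_mul, one_pow, mul_one] at hφB
  linarith

end Descent

section Preconditioner

variable {E : Type*} [NormedAddCommGroup E] [InnerProductSpace ℝ E]

theorem LinearMap.IsPositive.norm_apply_sq_le {T : E →ₗ[ℝ] E} (hT : T.IsPositive) {M : ℝ}
    (hM : ∀ v, ⟪v, T v⟫ ≤ M * ‖v‖ ^ 2) (x : E) : ‖T x‖ ^ 2 ≤ M * ⟪x, T x⟫ := by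
  set a := ⟪x, T x⟫
  set b := ‖T x‖ ^ 2
  have ha : 0 ≤ a := hT.inner_nonneg_right x
  have hTx : ⟪x, T (T x)⟫ = b := by
    rw [← hT.isSymmetric, real_inner_self_eq_norm_sq]
  have hcs : b * b ≤ a * ⟪T x, T (T x)⟫ := by
    have := LinearMap.BilinForm.apply_mul_apply_le_of_forall_zero_le ((innerₗ E).compl₂ T)
      hT.inner_nonneg_right x (T x)
    simp only [LinearMap.compl₂_apply, innerₗ_apply_apply] at this
    rwa [hTx, real_inner_self_eq_norm_sq] at this
  have hMa : 0 ≤ M * a := by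
    rcases le_or_gt 0 M with hM0 | hM0
    · positivity
    · have : a ≤ 0 := (hM x).trans (mul_nonpos_of_nonpos_of_nonneg hM0.le (by positivity))
      simp [le_antisymm this ha]
  rcases (show 0 ≤ b by positivity).eq_or_lt with hb | hb
  · rwa [← hb]
  · have : b * b ≤ b * (M * a) := by nlinarith [hM (T x)]
    exact le_of_mul_le_mul_left this hb

theorem le_apply_sub_apply_preconditioned_step [CompleteSpace E] {f : E → ℝ} {L : ℝ}
    (hf : Differentiable ℝ f) (hlip : ∀ x y, ‖gradient f x - gradient f y‖ ≤ L * ‖x - y‖)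
    {T : E →ₗ[ℝ] E} (hT : T.IsPositive) {M : ℝ} (hM₀ : 0 < M)
    (hM : ∀ v, ⟪v, T v⟫ ≤ M * ‖v‖ ^ 2) (x : E) {η : ℝ} (hη : 0 ≤ η) :
    (η / M - L * η ^ 2 / 2) * ‖T (gradient f x)‖ ^ 2 ≤
      f x - f (x + η • -T (gradient f x)) := by
  set g := gradient f x
  have hdesc := apply_add_le_of_lipschitz_gradient hf hlip x (η • -T g)
  rw [inner_smul_right, inner_neg_right, norm_smul, norm_neg, mul_pow, Real.norm_eq_abs,
    sq_abs] at hdesc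
  have hkey : η / M * ‖T g‖ ^ 2 ≤ η * ⟪g, T g⟫ := by
    rw [div_mul_eq_mul_div, div_le_iff₀ hM₀]
    nlinarith [hT.norm_apply_sq_le hM g]
  nlinarith

end Preconditioner

theorem norm_add_sq_eq_norm_sq_add_norm_sq_add_two_mul_norm_mul_norm_mul_cos_angle
    {V : Type*} [NormedAddCommGroup V] [InnerProductSpace ℝ V] (x y : V) :
    ‖x + y‖ ^ 2 = ‖x‖ ^ 2 + ‖y‖ ^ 2 + 2 * ‖x‖ * ‖y‖ * Real.cos (angle x y) := by
  rw [norm_add_sq_real, ← cos_angle_mul_norm_mul_norm]; ring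

theorem descent_constant_pos {L M η : ℝ} (hL : 0 < L) (hη : 0 < η) (hη2 : η < 2 / (L * M)) :
    0 < M ∧ 0 < η / M - L * η ^ 2 / 2 := by
  have hLM : 0 < L * M := by
    have := hη.trans hη2
    rwa [div_pos_iff_of_pos_left two_pos] at this
  have hM : 0 < M := pos_of_mul_pos_right hLM hL.le
  have hηLM : η * (L * M) < 2 := (lt_div_iff₀ hLM).1 hη2
  refine ⟨hM, ?_⟩
  have : η / M - L * η ^ 2 / 2 = η * (2 - η * (L * M)) / (2 * M) := by field_simp
  rw [this]
  exact div_pos (mul_pos hη (by linarith)) (by positivity)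

theorem alignment_maximizes_descent_general
    {n : ℕ} (𝓛 : EuclideanSpace ℝ (Fin n) → ℝ) (L : ℝ) (hL : 0 < L)
    (hdiff : Differentiable ℝ 𝓛)
    (hlip : ∀ x y, ‖gradient 𝓛 x - gradient 𝓛 y‖ ≤ L * ‖x - y‖)
    (P : Matrix (Fin n) (Fin n) ℝ) (hP : P.PosDef)
    (μ M : ℝ)
    (hspec : ∀ v : EuclideanSpace ℝ (Fin n),
      μ * ‖v‖ ^ 2 ≤ ⟪v, Matrix.toEuclideanLin P v⟫ ∧
      ⟪v, Matrix.toEuclideanLin P v⟫ ≤ M * ‖v‖ ^ 2)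
    (θ pR pD : EuclideanSpace ℝ (Fin n))
    (hsum : pR + pD = -(Matrix.toEuclideanLin P (gradient 𝓛 θ)))
    (η : ℝ) (hη : 0 < η) (hη2 : η < 2 / (L * M)) :
    0 < η / M - L * η ^ 2 / 2 ∧
    𝓛 θ - 𝓛 (θ + η • (pR + pD)) ≥
      (η / M - L * η ^ 2 / 2) *
        (‖pR‖ ^ 2 + ‖pD‖ ^ 2 +
          2 * ‖pR‖ * ‖pD‖ * (⟪pR, pD⟫ / (‖pR‖ * ‖pD‖))) := by
  obtain ⟨hM, hC⟩ := descent_constant_pos hL hη hη2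
  have hT : (Matrix.toEuclideanLin P).IsPositive :=
    Matrix.isPositive_toEuclideanLin_iff.mpr hP.posSemidef
  have hstep := le_apply_sub_apply_preconditioned_step hdiff hlip hT hM (fun v => (hspec v).2) θ hη.le
  rw [← cos_angle, ← norm_add_sq_eq_norm_sq_add_norm_sq_add_two_mul_norm_mul_norm_mul_cos_angle,
    hsum, norm_neg]
  exact ⟨hC, hstep⟩

/-- **Alignment maximizes descent efficiency.** Let `𝓛` be differentiable with
`L`-Lipschitz gradient, `P` a symmetric positive definite matrix whose eigenvalues
lie in `[μ, M]` (expressed via the quadratic form bounds), and let nonzero vectors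
`p_R, p_D` satisfy `p_R + p_D = −P∇𝓛(θ)`. Then for `0 < η < 2/(L·M)`, the constant
`C(η) = η/M − Lη²/2` is positive and the one-step loss reduction satisfies
`𝓛(θ) − 𝓛(θ + η·p) ≥ C(η)·(‖p_R‖² + ‖p_D‖² + 2‖p_R‖‖p_D‖·S(p_R, p_D))`. -/
theorem alignment_maximizes_descent
    {n : ℕ} (𝓛 : EuclideanSpace ℝ (Fin n) → ℝ) (L : ℝ) (hL : 0 < L)
    (hdiff : Differentiable ℝ 𝓛)
    (hlip : ∀ x y, ‖gradient 𝓛 x - gradient 𝓛 y‖ ≤ L * ‖x - y‖)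
    (P : Matrix (Fin n) (Fin n) ℝ) (hP : P.PosDef)
    (μ M : ℝ) (hμ : 0 < μ) (hμM : μ ≤ M)
    (hspec : ∀ v : EuclideanSpace ℝ (Fin n),
      μ * ‖v‖ ^ 2 ≤ ⟪v, Matrix.toEuclideanLin P v⟫ ∧
      ⟪v, Matrix.toEuclideanLin P v⟫ ≤ M * ‖v‖ ^ 2)
    (θ pR pD : EuclideanSpace ℝ (Fin n)) (hpR : pR ≠ 0) (hpD : pD ≠ 0)
    (hsum : pR + pD = -(Matrix.toEuclideanLin P (gradient 𝓛 θ)))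
    (η : ℝ) (hη : 0 < η) (hη2 : η < 2 / (L * M)) :
    0 < η / M - L * η ^ 2 / 2 ∧
    𝓛 θ - 𝓛 (θ + η • (pR + pD)) ≥
      (η / M - L * η ^ 2 / 2) *
        (‖pR‖ ^ 2 + ‖pD‖ ^ 2 +
          2 * ‖pR‖ * ‖pD‖ * (⟪pR, pD⟫ / (‖pR‖ * ‖pD‖))) :=
  alignment_maximizes_descent_general 𝓛 L hL hdiff hlip P hP μ M hspec θ pR pD hsum η hη hη2
end

section
/- Let p be a nonzero vector in a real inner product space, let c > 0, and let e be a vector with ‖e‖ < c·‖p‖. Then the vector q = c·p + e is nonzero, and the cosine score satisfies 1 − S(p, q) ≤ 2·‖e‖/(c·‖p‖); equivalently, S(p, c·p + e) ≥ 1 − 2‖e‖/(c‖p‖). In particular, a positively rescaled vector perturbed by a relatively small error remains nearly aligned with the original vector. -/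
open scoped RealInnerProductSpace

/-- **Cosine perturbation bound.** If `p` is a nonzero vector in a real inner product
space, `c > 0`, and `‖e‖ < c·‖p‖`, then `q = c•p + e` is nonzero and the cosine score
satisfies `1 − S(p,q) ≤ 2‖e‖/(c‖p‖)`, where `S(u,v) = ⟪u,v⟫/(‖u‖·‖v‖)`. -/
theorem cosine_perturbation_bound
    {E : Type*} [NormedAddCommGroup E] [InnerProductSpace ℝ E]
    (p e : E) (c : ℝ) (hp : p ≠ 0) (hc : 0 < c) (he : ‖e‖ < c * ‖p‖) :
    c • p + e ≠ 0 ∧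
      1 - ⟪p, c • p + e⟫ / (‖p‖ * ‖c • p + e‖) ≤ 2 * ‖e‖ / (c * ‖p‖) := by
  have hP : 0 < ‖p‖ := norm_pos_iff.mpr hp
  have hb : (0:ℝ) ≤ ‖e‖ := norm_nonneg e
  have ha : 0 < c * ‖p‖ := mul_pos hc hP
  have hnormcp : ‖c • p‖ = c * ‖p‖ := by
    rw [norm_smul, Real.norm_eq_abs, abs_of_pos hc]
  have hn_le : ‖c • p + e‖ ≤ c * ‖p‖ + ‖e‖ := by
    calc ‖c • p + e‖ ≤ ‖c • p‖ + ‖e‖ := norm_add_le _ _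
    _ = c * ‖p‖ + ‖e‖ := by rw [hnormcp]
  have hn_ge : c * ‖p‖ - ‖e‖ ≤ ‖c • p + e‖ := by
    have h1 : ‖(c • p + e) - e‖ ≤ ‖c • p + e‖ + ‖e‖ := norm_sub_le _ _
    simp only [add_sub_cancel_right, hnormcp] at h1
    linarith
  have hn : 0 < ‖c • p + e‖ := by linarith
  have hq0 : c • p + e ≠ 0 := by
    intro h
    rw [h, norm_zero] at hn
    exact lt_irrefl _ hn
  refine ⟨hq0, ?_⟩
  have hinner : ⟪p, c • p + e⟫ = c * ‖p‖ ^ 2 + ⟪p, e⟫ := by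
    rw [inner_add_right, real_inner_smul_right, real_inner_self_eq_norm_sq]
  have habs : |⟪p, e⟫| ≤ ‖p‖ * ‖e‖ := abs_real_inner_le_norm p e
  have hIe : -(‖p‖ * ‖e‖) ≤ ⟪p, e⟫ := neg_le_of_abs_le habs
  have hI : ‖p‖ * (c * ‖p‖ - ‖e‖) ≤ ⟪p, c • p + e⟫ := by
    rw [hinner]; nlinarith
  have h1 : (c * ‖p‖ - ‖e‖) / ‖c • p + e‖ ≤ ⟪p, c • p + e⟫ / (‖p‖ * ‖c • p + e‖) := by
    rw [div_le_div_iff₀ hn (mul_pos hP hn)]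
    nlinarith
  have h2 : 1 - (c * ‖p‖ - ‖e‖) / ‖c • p + e‖ ≤ 2 * ‖e‖ / (c * ‖p‖) := by
    have key : (‖c • p + e‖ - (c * ‖p‖ - ‖e‖)) / ‖c • p + e‖ ≤ 2 * ‖e‖ / (c * ‖p‖) := by
      rw [div_le_div_iff₀ hn ha]
      nlinarith [mul_nonneg (sub_nonneg.2 hn_le) (sub_nonneg.2 hn_ge)]
    have heq : (‖c • p + e‖ - (c * ‖p‖ - ‖e‖)) / ‖c • p + e‖
        = 1 - (c * ‖p‖ - ‖e‖) / ‖c • p + e‖ := by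
      field_simp
    linarith [heq ▸ key]
  linarith
end
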